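/- Let G be a finite group, X₁ and X₂ finite G-sets, and X = X₁ ⊔ X₂ their disjoint union (with the componentwise G-action). Then the n-th Cartesian power with its wreath product action decomposes: (X₁ ⊔ X₂)ⁿ with the G_n = Gⁿ ⋊ S_n action is G_n-equivariantly isomorphic to the disjoint union over k = 0,...,n of the induced sets ind_{G_k × G_{n-k}}^{G_n}(X₁^k × X₂^{n-k}), where G_k × G_{n-k} is embedded in G_n in the natural way and acts on X₁^k × X₂^{n-k} componentwise. -/

import Mathlib

/-- Componentwise action of `G × G'` on `X × X'`. -/
instance prodPairAction (G G' X X' : Type*) [Group G] [Group G']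
    [MulAction G X] [MulAction G' X'] : MulAction (G × G') (X × X') where
  smul p q := (p.1 • q.1, p.2 • q.2)
  one_smul q := Prod.ext (one_smul G q.1) (one_smul G' q.2)
  mul_smul a b q := Prod.ext (mul_smul a.1 b.1 q.1) (mul_smul a.2 b.2 q.2)
section Ind
variable {K H : Type*} [Group K] [Group H]

/-- The equivalence relation on `H × X` defining the induced `H`-set of a `K`-set `X`
along a homomorphism `f : K →* H`:
`(h₁,x₁) ∼ (h₂,x₂)` iff `∃ g, h₂ = h₁ (f g)⁻¹` and `x₂ = g • x₁`. -/
def indSetoid (f : K →* H) (X : Type*) [MulAction K X] : Setoid (H × X) where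
  r p q := ∃ g : K, q.1 = p.1 * (f g)⁻¹ ∧ q.2 = g • p.2
  iseqv := by
    constructor
    · exact fun p => ⟨1, by simp⟩
    · rintro p q ⟨g, h1, h2⟩
      exact ⟨g⁻¹, by simp [h1, mul_assoc], by simp [h2]⟩
    · rintro p q r ⟨g, h1, h2⟩ ⟨g', h1', h2'⟩
      exact ⟨g' * g, by simp [h1, h1', mul_assoc], by simp [h2, h2', mul_smul]⟩

/-- The induced `H`-set `ind_K^H X = (H × X)/∼`. -/
def Ind (f : K →* H) (X : Type*) [MulAction K X] : Type _ := Quotient (indSetoid f X)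

/-- `H` acts on the induced set by left multiplication on the first coordinate. -/
instance Ind.mulAction (f : K →* H) (X : Type*) [MulAction K X] :
    MulAction H (Ind f X) where
  smul h := Quotient.map (fun p => (h * p.1, p.2))
    (by rintro p q ⟨g, h1, h2⟩; exact ⟨g, by simp [h1, mul_assoc], h2⟩)
  one_smul x := by
    refine Quotient.inductionOn x (fun p => ?_)
    show Quotient.map _ _ _ = _
    simp
  mul_smul a b x := by
    refine Quotient.inductionOn x (fun p => ?_)
    show Quotient.map _ _ _ = Quotient.map _ _ (Quotient.map _ _ _)
    simp [mul_assoc]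

end Ind
section Wreath

variable (G : Type*) [Group G] (ι : Type*)

/-- Permutations of `ι` act on `ι → G` by automorphisms (permuting the factors). -/
def permAut : Equiv.Perm ι →* MulAut (ι → G) where
  toFun σ :=
    { toEquiv := Equiv.arrowCongr σ (Equiv.refl G)
      map_mul' := fun v w => rfl }
  map_one' := by ext v i; rfl
  map_mul' σ τ := by ext v i; rfl

/-- The wreath product `G_ι = G^ι ⋊ Perm ι`. -/
def Wr : Type _ := (ι → G) ⋊[permAut G ι] Equiv.Perm ι

instance : Group (Wr G ι) := inferInstanceAs (Group ((ι → G) ⋊[permAut G ι] Equiv.Perm ι))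

variable {G ι}

/-- The `G^ι`-component of an element of the wreath product. -/
def Wr.l (w : Wr G ι) : ι → G := SemidirectProduct.left w

/-- The `Perm ι`-component of an element of the wreath product. -/
def Wr.p (w : Wr G ι) : Equiv.Perm ι := SemidirectProduct.right w

/-- Building an element of the wreath product from its two components. -/
def Wr.mk (v : ι → G) (σ : Equiv.Perm ι) : Wr G ι := ⟨v, σ⟩

@[simp] lemma Wr.l_mk (v : ι → G) (σ : Equiv.Perm ι) : (Wr.mk v σ).l = v := rfl
@[simp] lemma Wr.p_mk (v : ι → G) (σ : Equiv.Perm ι) : (Wr.mk v σ).p = σ := rfl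
@[simp] lemma Wr.l_one : (1 : Wr G ι).l = 1 := rfl
@[simp] lemma Wr.p_one : (1 : Wr G ι).p = 1 := rfl
@[simp] lemma Wr.l_mul (a b : Wr G ι) : (a * b).l = a.l * fun i => b.l (a.p.symm i) := rfl
@[simp] lemma Wr.p_mul (a b : Wr G ι) : (a * b).p = a.p * b.p := rfl

variable (G ι)

/-- The natural action of the wreath product `G_ι` on `X^ι`:
`S_ι` permutes the factors and `G^ι` acts componentwise. -/
instance wrAction (X : Type*) [MulAction G X] : MulAction (Wr G ι) (ι → X) where
  smul w y := fun i => w.l i • y (w.p.symm i)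
  one_smul y := funext fun i => by
    show (1 : Wr G ι).l i • y ((1 : Wr G ι).p.symm i) = y i
    simp
    rfl
  mul_smul a b y := funext fun i => by
    show (a * b).l i • y ((a * b).p.symm i) =
      a.l i • b.l (a.p.symm i) • y (b.p.symm (a.p.symm i))
    rw [Wr.l_mul, Wr.p_mul, Pi.mul_apply, mul_smul]
    rfl

@[simp] lemma wr_smul_apply {X : Type*} [MulAction G X] (w : Wr G ι) (y : ι → X) (i : ι) :
    (w • y) i = w.l i • y (w.p.symm i) := rfl

end Wreath
section WreathHoms

@[simp] lemma Wr.mk_mul {G : Type*} [Group G] {ι : Type*} (v w : ι → G)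
    (σ τ : Equiv.Perm ι) :
    Wr.mk v σ * Wr.mk w τ = Wr.mk (fun i => v i * w (σ.symm i)) (σ * τ) := rfl

@[simp] lemma Wr.left_mk {G : Type*} [Group G] {ι : Type*} (v : ι → G) (σ : Equiv.Perm ι) :
    SemidirectProduct.left (Wr.mk v σ) = v := rfl

@[simp] lemma Wr.right_mk {G : Type*} [Group G] {ι : Type*} (v : ι → G) (σ : Equiv.Perm ι) :
    SemidirectProduct.right (Wr.mk v σ) = σ := rfl

variable (G : Type*) [Group G]

/-- The natural embedding `G_ι × G_κ → G_{ι ⊕ κ}` of wreath products. -/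
def wrJoin (ι κ : Type*) : Wr G ι × Wr G κ →* Wr G (ι ⊕ κ) where
  toFun p := Wr.mk (Sum.elim p.1.l p.2.l) (Equiv.Perm.sumCongrHom ι κ (p.1.p, p.2.p))
  map_one' := by
    apply SemidirectProduct.ext
    · funext i; cases i <;> rfl
    · show Equiv.Perm.sumCongrHom ι κ (1, 1) = 1
      exact map_one _
  map_mul' p q := by
    show Wr.mk _ _ = Wr.mk _ _ * Wr.mk _ _
    rw [Wr.mk_mul]
    apply SemidirectProduct.ext
    · funext i
      cases i with
      | inl a =>
          show (p.1.l * fun i => q.1.l (p.1.p.symm i)) a = _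
          simp [Equiv.Perm.sumCongrHom]
      | inr b =>
          show (p.2.l * fun i => q.2.l (p.2.p.symm i)) b = _
          simp [Equiv.Perm.sumCongrHom]
    · exact map_mul (Equiv.Perm.sumCongrHom ι κ) (p.1.p, p.2.p) (q.1.p, q.2.p)

/-- Transport of wreath products along a bijection of index sets. -/
def wrCongrHom {ι κ : Type*} (e : ι ≃ κ) : Wr G ι →* Wr G κ where
  toFun w := Wr.mk (w.l ∘ e.symm) (e.permCongr w.p)
  map_one' := by
    apply SemidirectProduct.ext
    · rfl
    · show e.permCongr 1 = 1
      ext x; simp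
  map_mul' a b := by
    show Wr.mk _ _ = Wr.mk _ _ * Wr.mk _ _
    rw [Wr.mk_mul]
    apply SemidirectProduct.ext
    · funext i
      show (a.l * fun i => b.l (a.p.symm i)) (e.symm i) = _
      simp [Equiv.permCongr, Equiv.equivCongr]
    · ext x
      simp [Equiv.permCongr, Equiv.equivCongr, Equiv.Perm.mul_apply]

/-- The homomorphism of wreath products `K_ι → H_ι` induced by `f : K →* H`. -/
def wrMapHom {K H : Type*} [Group K] [Group H] (f : K →* H) (ι : Type*) :
    Wr K ι →* Wr H ι where
  toFun w := Wr.mk (f ∘ w.l) w.p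
  map_one' := by
    apply SemidirectProduct.ext
    · funext i; exact map_one f
    · rfl
  map_mul' a b := by
    show Wr.mk _ _ = Wr.mk _ _ * Wr.mk _ _
    rw [Wr.mk_mul]
    apply SemidirectProduct.ext
    · funext i
      show f ((a.l * fun i => b.l (a.p.symm i)) i) = _
      simp
    · rfl

variable (ι : Type*)

/-- The big `G`-diagonal in `X^ι`: tuples with two coordinates in the same `G`-orbit. -/
def bigDiag (X : Type*) [MulAction G X] : Set (ι → X) :=
  {y | ∃ i j, i ≠ j ∧ y i ∈ MulAction.orbit G (y j)}

/-- The wreath product `G_ι` acts on the complement of the big diagonal in `X^ι`. -/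
instance wrDiagAction (X : Type*) [MulAction G X] :
    MulAction (Wr G ι) {y : ι → X // y ∉ bigDiag G ι X} where
  smul w y := ⟨w • (y : ι → X), by
    rintro ⟨i, j, hij, g, hg⟩
    apply y.2
    refine ⟨w.p.symm i, w.p.symm j, fun h => hij (by simpa using congrArg w.p h), ?_⟩
    refine ⟨(w.l i)⁻¹ * g * w.l j, ?_⟩
    have hg' : g • (w.l j • (y : ι → X) (w.p.symm j)) = w.l i • (y : ι → X) (w.p.symm i) := hg
    calc ((w.l i)⁻¹ * g * w.l j) • (y : ι → X) (w.p.symm j)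
        = (w.l i)⁻¹ • g • w.l j • (y : ι → X) (w.p.symm j) := by
          rw [mul_smul, mul_smul]
      _ = (y : ι → X) (w.p.symm i) := by rw [hg', inv_smul_smul]⟩
  one_smul y := Subtype.ext (one_smul _ (y : ι → X))
  mul_smul a b y := Subtype.ext (mul_smul a b (y : ι → X))

end WreathHoms
/-- The natural embedding `G_k × G_{n-k} → G_n` of wreath products (via the identification
`Fin k ⊕ Fin (n-k) ≃ Fin n`). -/
def wrEmbed (G : Type*) [Group G] (n k : ℕ) (hk : k ≤ n) :
    Wr G (Fin k) × Wr G (Fin (n - k)) →* Wr G (Fin n) :=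
  (wrCongrHom G (finSumFinEquiv.trans (finCongr (by omega)))).comp
    (wrJoin G (Fin k) (Fin (n - k)))

/-!
The number of coordinates of `y : Fin n → X₁ ⊕ X₂` lying in `X₁` is invariant under `G_n`, and
a tuple with `k` such coordinates is carried by a permutation to a standard tuple, with its
`X₁`-coordinates in the first `k` places. An element of `G_n` carrying one standard tuple to
another preserves the two blocks of coordinates, hence comes from `G_k × G_{n-k}`. So
`[w, (a, b)] ↦ w • (a, b)` maps `ind_{G_k × G_{n-k}}^{G_n} (X₁^k × X₂^{n-k})` bijectively onto
the tuples with `k` coordinates in `X₁`.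
-/

namespace Ind

variable {K H : Type*} [Group K] [Group H] {f : K →* H} {X Y : Type*} [MulAction K X]
  [MulAction H Y]

def mk (f : K →* H) (h : H) (x : X) : Ind f X := Quotient.mk (indSetoid f X) (h, x)

lemma smul_mk (h' h : H) (x : X) : h' • mk f h x = mk f (h' * h) x := rfl

lemma mk_surjective : Function.Surjective (fun p : H × X => mk f p.1 p.2) :=
  Quotient.mk_surjective

def lift (j : X → Y) (hj : ∀ (g : K) (x : X), j (g • x) = f g • j x) : Ind f X → Y :=
  Quotient.lift (fun p => p.1 • j p.2) <| by
    rintro ⟨h, x⟩ ⟨h', x'⟩ ⟨g, rfl, rfl⟩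
    simp only [hj, mul_smul, inv_smul_smul]

variable {j : X → Y} {hj : ∀ (g : K) (x : X), j (g • x) = f g • j x}

@[simp] lemma lift_mk (h : H) (x : X) : lift j hj (mk f h x) = h • j x := rfl

lemma lift_smul (h : H) (z : Ind f X) : lift j hj (h • z) = h • lift j hj z := by
  obtain ⟨⟨h', x⟩, rfl⟩ := mk_surjective z
  simp only [smul_mk, lift_mk, mul_smul]

lemma lift_injective (hstab : ∀ (h : H) (x x' : X), h • j x = j x' → ∃ g, f g = h ∧ g • x = x') :
    Function.Injective (lift j hj) := by
  rintro z z' hzz'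
  obtain ⟨⟨h, x⟩, rfl⟩ := mk_surjective z
  obtain ⟨⟨h', x'⟩, rfl⟩ := mk_surjective z'
  obtain ⟨g, hg, rfl⟩ := hstab (h'⁻¹ * h) x x' <| by
    simpa only [lift_mk, mul_smul, inv_smul_eq_iff] using hzz'
  exact Quotient.sound ⟨g, by simp [hg], rfl⟩

end Ind

lemma Sum.isLeft_smul {M α β : Type*} [SMul M α] [SMul M β] (m : M) (x : α ⊕ β) :
    (m • x).isLeft = x.isLeft := by
  cases x <;> rfl

lemma Sum.exists_map_eq {α β γ δ : Type*} (z : α ⊕ β → γ ⊕ δ)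
    (hz : ∀ x, (z x).isLeft = x.isLeft) : ∃ (f : α → γ) (g : β → δ), Sum.map f g = z := by
  have hl (a : α) : (z (.inl a)).isLeft := by rw [hz]; rfl
  have hr (b : β) : (z (.inr b)).isRight := by rw [← Sum.not_isLeft, hz]; simp
  refine ⟨fun a => (z (.inl a)).getLeft (hl a), fun b => (z (.inr b)).getRight (hr b), ?_⟩
  funext x
  cases x with
  | inl a => exact (Sum.eq_left_getLeft_of_isLeft (hl a)).symm
  | inr b => exact (Sum.eq_right_getRight_of_isRight (hr b)).symm

section SumTuple

variable (G : Type*) [Group G] {X₁ X₂ : Type*} [MulAction G X₁] [MulAction G X₂]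
  {ι κ ν : Type*} (e : ι ⊕ κ ≃ ν)

def wrSumEmbed : Wr G ι × Wr G κ →* Wr G ν :=
  (wrCongrHom G e).comp (wrJoin G ι κ)

variable {G}

def sumTuple (p : (ι → X₁) × (κ → X₂)) : ν → X₁ ⊕ X₂ :=
  Sum.map p.1 p.2 ∘ e.symm

lemma sumTuple_injective : Function.Injective (sumTuple e : _ → ν → X₁ ⊕ X₂) := by
  intro p q h
  have h' : Sum.map p.1 p.2 = Sum.map q.1 q.2 := by
    simpa [sumTuple, Equiv.comp_symm_eq, Function.comp_assoc] using h
  exact Prod.ext (funext fun i => Sum.inl_injective (congrFun h' (.inl i)))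
    (funext fun i => Sum.inr_injective (congrFun h' (.inr i)))

lemma wrSumEmbed_smul_apply {X : Type*} [MulAction G X] (g : Wr G ι × Wr G κ) (y : ν → X)
    (i : ν) : (wrSumEmbed G e g • y) i =
      Sum.elim g.1.l g.2.l (e.symm i) • y (e (Sum.map g.1.p.symm g.2.p.symm (e.symm i))) :=
  rfl

lemma wrSumEmbed_smul_sumTuple (g : Wr G ι × Wr G κ) (p : (ι → X₁) × (κ → X₂)) :
    wrSumEmbed G e g • sumTuple e p = sumTuple e (g • p) := by
  funext i
  simp only [wrSumEmbed_smul_apply, sumTuple, Function.comp_apply, Equiv.symm_apply_apply]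
  rcases e.symm i with a | b <;> rfl

lemma exists_wrSumEmbed_eq_of_smul_sumTuple [Finite ι] [Finite κ] {u : Wr G ν}
    {p q : (ι → X₁) × (κ → X₂)} (h : u • sumTuple e p = sumTuple e q) :
    ∃ g, wrSumEmbed G e g = u ∧ g • p = q := by
  set ρ : Equiv.Perm (ι ⊕ κ) := e.symm.permCongr u.p
  have hρ : Set.MapsTo ρ (Set.range Sum.inl) (Set.range Sum.inl) := by
    rintro _ ⟨a, rfl⟩
    have ha := congrArg Sum.isLeft (congrFun h (u.p (e (.inl a))))
    simp only [wr_smul_apply, Sum.isLeft_smul, sumTuple, Function.comp_apply,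
      Equiv.symm_apply_apply, Sum.isLeft_map, Sum.isLeft_inl] at ha
    obtain ⟨b, hb⟩ := Sum.isLeft_iff.mp ha.symm
    exact ⟨b, hb.symm⟩
  obtain ⟨⟨σ₁, σ₂⟩, hσ⟩ := Equiv.Perm.mem_sumCongrHom_range_of_perm_mapsTo_inl hρ
  let g : Wr G ι × Wr G κ := (Wr.mk ((u.l ∘ e) ∘ Sum.inl) σ₁, Wr.mk ((u.l ∘ e) ∘ Sum.inr) σ₂)
  have hg : wrSumEmbed G e g = u := by
    apply SemidirectProduct.ext
    · show Sum.elim ((u.l ∘ e) ∘ Sum.inl) ((u.l ∘ e) ∘ Sum.inr) ∘ e.symm = u.l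
      rw [Sum.elim_comp_inl_inr]
      funext i
      simp
    · show e.permCongr (Equiv.Perm.sumCongrHom ι κ (σ₁, σ₂)) = u.p
      rw [hσ]
      ext i
      simp [ρ]
  refine ⟨g, hg, sumTuple_injective e ?_⟩
  rw [← wrSumEmbed_smul_sumTuple, hg, h]

end SumTuple

section LeftCount

variable {G : Type*} [Group G] {X₁ X₂ : Type*} [MulAction G X₁] [MulAction G X₂]
  {ι κ ν : Type*} [Fintype ν] (e : ι ⊕ κ ≃ ν)

def leftCount {α β : Type*} (y : ν → α ⊕ β) : ℕ := Fintype.card {i // (y i).isLeft}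

lemma leftCount_smul (w : Wr G ν) (y : ν → X₁ ⊕ X₂) : leftCount (w • y) = leftCount y :=
  Fintype.card_congr <| Equiv.subtypeEquiv w.p.symm fun i => by
    rw [wr_smul_apply, Sum.isLeft_smul]

lemma leftCount_sumTuple [Fintype ι] (p : (ι → X₁) × (κ → X₂)) :
    leftCount (sumTuple e p) = Fintype.card ι :=
  Fintype.card_congr <| (Equiv.subtypeEquiv e.symm fun i => by
    rw [sumTuple, Function.comp_apply, Sum.isLeft_map]).trans Equiv.sumIsLeft

lemma exists_smul_sumTuple_eq [Fintype ι] [Fintype κ] (y : ν → X₁ ⊕ X₂)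
    (hι : Fintype.card ι = leftCount y) (hκ : Fintype.card κ = Fintype.card ν - leftCount y) :
    ∃ (w : Wr G ν) (p : (ι → X₁) × (κ → X₂)), w • sumTuple e p = y := by
  have hκ' : Fintype.card κ = Fintype.card {i // ¬(y i).isLeft} := by
    rw [hκ, leftCount, Fintype.card_subtype_compl]
  let c : ι ⊕ κ ≃ ν :=
    (Equiv.sumCongr (Fintype.equivOfCardEq hι) (Fintype.equivOfCardEq hκ')).trans
      (Equiv.sumCompl fun i => (y i).isLeft)
  obtain ⟨a, b, hab⟩ := Sum.exists_map_eq (y ∘ c) <| by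
    rintro (j | j)
    · simpa [c] using ((Fintype.equivOfCardEq hι) j).2
    · simpa [c] using ((Fintype.equivOfCardEq hκ') j).2
  refine ⟨Wr.mk 1 (e.symm.trans c), (a, b), funext fun i => ?_⟩
  simp [sumTuple, hab]

end LeftCount

section SumTupleInd

variable {G : Type*} [Group G] {X₁ X₂ : Type*} [MulAction G X₁] [MulAction G X₂]
  {ι κ ν : Type*} (e : ι ⊕ κ ≃ ν)

def sumTupleInd : Ind (wrSumEmbed G e) ((ι → X₁) × (κ → X₂)) → ν → X₁ ⊕ X₂ :=
  Ind.lift (sumTuple e) fun g p => (wrSumEmbed_smul_sumTuple e g p).symm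

lemma sumTupleInd_smul (w : Wr G ν) (z : Ind (wrSumEmbed G e) ((ι → X₁) × (κ → X₂))) :
    sumTupleInd e (w • z) = w • sumTupleInd e z :=
  Ind.lift_smul w z

lemma sumTupleInd_injective [Finite ι] [Finite κ] :
    Function.Injective (sumTupleInd (G := G) (X₁ := X₁) (X₂ := X₂) e) :=
  Ind.lift_injective fun _ _ _ h => exists_wrSumEmbed_eq_of_smul_sumTuple e h

lemma leftCount_sumTupleInd [Fintype ν] [Fintype ι]
    (z : Ind (wrSumEmbed G e) ((ι → X₁) × (κ → X₂))) :
    leftCount (sumTupleInd e z) = Fintype.card ι := by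
  obtain ⟨⟨w, p⟩, rfl⟩ := Ind.mk_surjective z
  exact (leftCount_smul w _).trans (leftCount_sumTuple e p)

lemma exists_sumTupleInd_eq [Fintype ν] [Fintype ι] [Fintype κ] (y : ν → X₁ ⊕ X₂)
    (hι : Fintype.card ι = leftCount y) (hκ : Fintype.card κ = Fintype.card ν - leftCount y) :
    ∃ z : Ind (wrSumEmbed G e) ((ι → X₁) × (κ → X₂)), sumTupleInd e z = y := by
  obtain ⟨w, p, hwp⟩ := exists_smul_sumTuple_eq (G := G) e y hι hκ
  exact ⟨Ind.mk _ w p, hwp⟩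

end SumTupleInd

theorem sum_power_decomposes_into_induced_pieces_general
    (G : Type) [Group G]
    (X₁ X₂ : Type) [MulAction G X₁] [MulAction G X₂] (n : ℕ) :
    ∃ e : (Fin n → (X₁ ⊕ X₂)) ≃
        Σ k : Fin (n + 1),
          Ind (wrEmbed G n k (Fin.is_le k)) ((Fin (k : ℕ) → X₁) × (Fin (n - (k : ℕ)) → X₂)),
      ∀ (w : Wr G (Fin n)) (y : Fin n → (X₁ ⊕ X₂)), e (w • y) = w • e y := by
  let e (k : Fin (n + 1)) : Fin k ⊕ Fin (n - k) ≃ Fin n :=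
    finSumFinEquiv.trans (finCongr (by omega))
  let F (z : Σ k : Fin (n + 1),
      Ind (wrEmbed G n k (Fin.is_le k)) ((Fin (k : ℕ) → X₁) × (Fin (n - (k : ℕ)) → X₂))) :
      Fin n → X₁ ⊕ X₂ :=
    sumTupleInd (e z.1) z.2
  have hF_leftCount (z) : leftCount (F z) = z.1 :=
    (leftCount_sumTupleInd (e z.1) z.2).trans (Fintype.card_fin _)
  have hF : Function.Bijective F := by
    constructor
    · rintro ⟨k, z⟩ ⟨k', z'⟩ h
      obtain rfl : k = k' :=
        Fin.ext ((hF_leftCount ⟨k, z⟩).symm.trans (h ▸ hF_leftCount ⟨k', z'⟩))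
      exact congrArg (Sigma.mk k) (sumTupleInd_injective (e k) h)
    · intro y
      have hy : leftCount y ≤ n := (Fintype.card_subtype_le _).trans_eq (Fintype.card_fin n)
      obtain ⟨z, hz⟩ := exists_sumTupleInd_eq (G := G) (e ⟨leftCount y, by omega⟩) y
        (Fintype.card_fin _) (by simp)
      exact ⟨⟨_, z⟩, hz⟩
  have hF_smul (w : Wr G (Fin n)) (z) : F (w • z) = w • F z := sumTupleInd_smul _ w z.2
  refine ⟨(Equiv.ofBijective F hF).symm, fun w y => ?_⟩
  rw [Equiv.symm_apply_eq, Equiv.ofBijective_apply, hF_smul, ← Equiv.ofBijective_apply F hF,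
    Equiv.apply_symm_apply]

theorem sum_power_decomposes_into_induced_pieces
    (G : Type) [Group G] [Finite G]
    (X₁ X₂ : Type) [MulAction G X₁] [MulAction G X₂] [Finite X₁] [Finite X₂] (n : ℕ) :
    ∃ e : (Fin n → (X₁ ⊕ X₂)) ≃
        Σ k : Fin (n + 1),
          Ind (wrEmbed G n k (Fin.is_le k)) ((Fin (k : ℕ) → X₁) × (Fin (n - (k : ℕ)) → X₂)),
      ∀ (w : Wr G (Fin n)) (y : Fin n → (X₁ ⊕ X₂)), e (w • y) = w • e y :=
  sum_power_decomposes_into_induced_pieces_general G X₁ X₂ n
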